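/- arXiv:2303.09125 — 4 statements merged into one kernel-verified Lean document; each statement's English description precedes it below -/
import Mathlib

section
/- Let A be a finite commutative ring with unity and let G = A/a₁A ⊕ ⋯ ⊕ A/a_lA for some a₁, …, a_l ∈ A. Then |Hom_A(G, A)| = |G|. -/
/-!
A homomorphism `A ⧸ (a) → A` is determined by the image of `1`, which may be any element killed
by `a`; so `Hom_A(A ⧸ (a), A)` is the kernel of multiplication by `a` on `A`. For an endomorphism
of a finite module the kernel and the cokernel have the same size, and the cokernel of
multiplication by `a` is `A ⧸ (a)`. Both sides of the theorem turn direct sums into products.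
-/

open LinearMap Submodule

theorem LinearMap.card_ker_eq_card_quotient_range {R M : Type*} [Ring R] [AddCommGroup M]
    [Module R M] [Finite M] (f : M →ₗ[R] M) :
    Nat.card (ker f) = Nat.card (M ⧸ range f) := by
  have hker : Nat.card M = Nat.card (ker f) * Nat.card (range f) := by
    rw [card_eq_card_quotient_mul_card (ker f), Nat.card_congr f.quotKerEquivRange.toEquiv]
  have hrange := card_eq_card_quotient_mul_card (range f)
  rw [hker, mul_comm] at hrange
  exact Nat.eq_of_mul_eq_mul_left Nat.card_pos hrange

section

variable {A M : Type*} [CommRing A] [AddCommGroup M] [Module A M]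

noncomputable def quotSpanSingletonHomEquivTorsionBy (a : A) :
    ((A ⧸ Ideal.span {a}) →ₗ[A] M) ≃ₗ[A] torsionBy A M a where
  toFun f := ⟨f 1, by simp [← map_smul, Algebra.smul_def]⟩
  map_add' _ _ := rfl
  map_smul' _ _ := rfl
  invFun m := liftQSpanSingleton a (toSpanSingleton A M m) (by simp)
  left_inv f := by
    ext
    exact one_smul A _
  right_inv m := Subtype.ext (one_smul A m.1)

theorem range_toLinearMap_smul_self (a : A) :
    range (DistribSMul.toLinearMap A A a) = Ideal.span {a} := by
  ext x
  simp [Ideal.mem_span_singleton', mul_comm]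

theorem card_quotSpanSingleton_hom_self [Finite A] (a : A) :
    Nat.card ((A ⧸ Ideal.span {a}) →ₗ[A] A) = Nat.card (A ⧸ Ideal.span {a}) := by
  rw [Nat.card_congr (quotSpanSingletonHomEquivTorsionBy a).toEquiv, torsionBy,
    card_ker_eq_card_quotient_range, range_toLinearMap_smul_self]

end

/-- For a finite commutative ring `A` with unity and
`G = A/a₁A ⊕ ⋯ ⊕ A/a_lA`, one has `|Hom_A(G, A)| = |G|`. -/
theorem stmt_1 (A : Type*) [CommRing A] [Fintype A] (l : ℕ) (a : Fin l → A) :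
    Nat.card (((i : Fin l) → A ⧸ Ideal.span {a i}) →ₗ[A] A)
      = Nat.card ((i : Fin l) → A ⧸ Ideal.span {a i}) := by
  rw [← Nat.card_congr (lsum A (fun i => A ⧸ Ideal.span {a i}) A).toEquiv,
    Nat.card_pi, Nat.card_pi]
  exact Finset.prod_congr rfl fun i _ => card_quotSpanSingleton_hom_self (a i)
end

section
/- Let D be a principal ideal domain, f a nonzero element of D, and A = D/fD. Then A is annihilator-reversing: for any x, y ∈ A with Ann(x) ⊆ Ann(y), one has yA ⊆ xA. -/
theorem Ideal.Quotient.span_singleton_mk_le_iff {R : Type*} [CommRing R] (a b f : R) :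
    Ideal.span {Ideal.Quotient.mk (Ideal.span {f}) b} ≤
        Ideal.span {Ideal.Quotient.mk (Ideal.span {f}) a} ↔
      b ∈ Ideal.span {a, f} := by
  rw [Ideal.span_singleton_le_iff_mem, ← Set.image_singleton, ← Ideal.map_span,
    Ideal.mem_quotient_iff_mem_sup, Ideal.span_insert]

/-- With `g` a generator of `(a, f)` and `f = g f'`, the element `f'` kills `a` modulo `f`,
so `g f' ∣ f' b`, whence `g ∣ b`. -/
theorem mem_span_pair_of_forall_dvd_mul {R : Type*} [CommRing R] [IsDomain R] [IsBezout R]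
    {a b f : R} (hf : f ≠ 0) (h : ∀ r, f ∣ r * a → f ∣ r * b) :
    b ∈ Ideal.span {a, f} := by
  obtain ⟨g, hg⟩ := IsBezout.span_pair_isPrincipal a f
  rw [Ideal.submodule_span_eq] at hg
  have hg_dvd {c : R} (hc : c ∈ Ideal.span {a, f}) : g ∣ c := by
    rwa [hg, Ideal.mem_span_singleton] at hc
  obtain ⟨a', rfl⟩ := hg_dvd (Ideal.subset_span (by simp) : a ∈ Ideal.span {a, f})
  obtain ⟨f', rfl⟩ := hg_dvd (Ideal.subset_span (by simp) : f ∈ Ideal.span {g * a', f})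
  have hf' : f' ≠ 0 := right_ne_zero_of_mul hf
  have hgb : g * f' ∣ b * f' := by
    simpa only [mul_comm f' b] using h f' ⟨a', by ring⟩
  rw [hg, Ideal.mem_span_singleton]
  exact (mul_dvd_mul_iff_right hf').mp hgb

/-- For a PID `D` and nonzero `f ∈ D`, the quotient `A = D/fD` is
annihilator-reversing: `Ann(x) ⊆ Ann(y)` implies `yA ⊆ xA`. -/
theorem stmt_4 (D : Type*) [CommRing D] [IsDomain D] [IsPrincipalIdealRing D]
    (f : D) (hf : f ≠ 0) (x y : D ⧸ Ideal.span {f})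
    (h : ∀ r : D ⧸ Ideal.span {f}, r * x = 0 → r * y = 0) :
    Ideal.span {y} ≤ Ideal.span {x} := by
  obtain ⟨a, rfl⟩ := Ideal.Quotient.mk_surjective x
  obtain ⟨b, rfl⟩ := Ideal.Quotient.mk_surjective y
  rw [Ideal.Quotient.span_singleton_mk_le_iff]
  refine mem_span_pair_of_forall_dvd_mul hf fun r => ?_
  simpa only [← map_mul, Ideal.Quotient.eq_zero_iff_dvd] using h (Ideal.Quotient.mk _ r)
end

section
/- Let μ be a probability measure on ℤ/p^kℤ such that Prob(x ≡ a mod p) ≤ 1 − ε for every a ∈ 𝔽_p, where 0 < ε < 1. Then for every nonzero u ∈ ℤ/p^kℤ, |E_{x ~ μ}(ζ^{ux})| ≤ e^{−ε/p^{2k}}, where ζ = e^{2πi/p^k}. -/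
/-!
Expanding `‖∑ μ(x) ζ^{ux}‖²` gives `∑_{x,y} μ(x) μ(y) cos (2π u (y - x) / p^k)`. When
`x ≢ y (mod p)`, `y - x` is a unit of `ℤ/p^kℤ`, so `u (y - x) ≠ 0` and the cosine is at most
`1 - 8/p^{2k}`, in particular at most `1 - 2/p^{2k}`. For each `x` the `y ≢ x (mod p)` carry
mass at least `ε`, so the square is at most `1 - 2ε/p^{2k} ≤ e^{-2ε/p^{2k}}`.
-/
open Complex ComplexConjugate Finset

namespace Real

lemma cos_le_one_sub_mul_sq_of_mem_Icc {a x : ℝ} (ha : 0 ≤ a) (hax : a ≤ x)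
    (hxa : x ≤ 2 * π - a) : cos x ≤ 1 - 2 / π ^ 2 * a ^ 2 := by
  rcases le_total x π with hxπ | hπx
  · calc cos x ≤ 1 - 2 / π ^ 2 * x ^ 2 :=
          cos_le_one_sub_mul_cos_sq (by rwa [abs_of_nonneg (ha.trans hax)])
      _ ≤ 1 - 2 / π ^ 2 * a ^ 2 := by gcongr
  · calc cos x = cos (2 * π - x) := (cos_two_pi_sub x).symm
      _ ≤ 1 - 2 / π ^ 2 * (2 * π - x) ^ 2 :=
          cos_le_one_sub_mul_cos_sq (by rw [abs_of_nonneg (by linarith)]; linarith)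
      _ ≤ 1 - 2 / π ^ 2 * a ^ 2 := by gcongr; linarith

end Real

namespace ZMod

lemma re_toCircle_le {N : ℕ} [NeZero N] {w : ZMod N} (hw : w ≠ 0) :
    (toCircle w : ℂ).re ≤ 1 - 8 / (N : ℝ) ^ 2 := by
  have hN : (0 : ℝ) < N := by exact_mod_cast Nat.pos_of_ne_zero (NeZero.ne N)
  have hval : (1 : ℝ) ≤ w.val := by
    exact_mod_cast Nat.one_le_iff_ne_zero.mpr ((val_ne_zero w).mpr hw)
  have hval' : (w.val : ℝ) + 1 ≤ N := by exact_mod_cast w.val_lt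
  rw [toCircle_eq_circleExp, Circle.coe_exp, exp_ofReal_mul_I_re]
  convert Real.cos_le_one_sub_mul_sq_of_mem_Icc (a := 2 * Real.pi / N) (by positivity) ?_ ?_ using 2
  · field_simp; ring
  · rw [← mul_div_assoc]
    exact div_le_div_of_nonneg_right (by nlinarith [Real.pi_pos]) hN.le
  · rw [← mul_div_assoc, le_sub_iff_add_le, ← add_div, div_le_iff₀ hN]
    nlinarith [Real.pi_pos]

lemma isUnit_of_castHom_ne_zero {p k : ℕ} [Fact p.Prime] (h : p ∣ p ^ k) {w : ZMod (p ^ k)}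
    (hw : castHom h (ZMod p) w ≠ 0) : IsUnit w := by
  rw [← natCast_zmod_val w, isUnit_iff_coprime]
  refine Nat.Coprime.pow_right k (Nat.coprime_comm.mp ?_)
  refine (Nat.Prime.coprime_iff_not_dvd Fact.out).mpr fun hdvd ↦ hw ?_
  rwa [castHom_apply, cast_eq_val, natCast_eq_zero_iff]

end ZMod

lemma sum_mul_le_one_sub_mul {ι : Type*} [Fintype ι] {μ c : ι → ℝ} {δ ε : ℝ}
    (hμ0 : ∀ i, 0 ≤ μ i) (hμ1 : ∑ i, μ i = 1) (s : Finset ι)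
    (hs : ∑ i ∈ s, μ i ≤ 1 - ε) (hδ : 0 ≤ δ) (hc : ∀ i, c i ≤ 1)
    (hcs : ∀ i ∉ s, c i ≤ 1 - δ) :
    ∑ i, μ i * c i ≤ 1 - δ * ε := by
  classical
  have hterm : ∀ i, μ i * c i ≤ (1 - δ) * μ i + δ * if i ∈ s then μ i else 0 := by
    intro i
    split_ifs with hi
    · nlinarith [hc i, hμ0 i]
    · nlinarith [hcs i hi, hμ0 i]
  calc ∑ i, μ i * c i ≤ ∑ i, ((1 - δ) * μ i + δ * if i ∈ s then μ i else 0) :=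
        sum_le_sum fun i _ ↦ hterm i
    _ = (1 - δ) + δ * ∑ i ∈ s, μ i := by
        rw [sum_add_distrib, ← mul_sum, ← mul_sum, hμ1, sum_ite_mem, univ_inter, mul_one]
    _ ≤ 1 - δ * ε := by nlinarith

lemma Complex.sq_norm_sum_ofReal_mul {ι : Type*} [Fintype ι] (μ : ι → ℝ) (z : ι → ℂ) :
    ‖∑ i, (μ i : ℂ) * z i‖ ^ 2 = ∑ i, ∑ j, μ i * μ j * (conj (z i) * z j).re := by
  rw [← ofReal_re (_ ^ 2), ofReal_pow, ← conj_mul', map_sum, sum_mul_sum, re_sum]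
  refine sum_congr rfl fun i _ ↦ ?_
  rw [re_sum]
  refine sum_congr rfl fun j _ ↦ ?_
  rw [map_mul, conj_ofReal, mul_mul_mul_comm, ← ofReal_mul, re_ofReal_mul]

lemma sq_norm_sum_mul_le_of_balanced {ι κ : Type*} [Fintype ι] [DecidableEq κ]
    {μ : ι → ℝ} (hμ0 : ∀ i, 0 ≤ μ i) (hμ1 : ∑ i, μ i = 1) {f : ι → κ} {ε : ℝ}
    (hbal : ∀ a, ∑ i ∈ univ.filter (fun i ↦ f i = a), μ i ≤ 1 - ε)
    {z : ι → ℂ} (hz : ∀ i, ‖z i‖ ≤ 1) {δ : ℝ} (hδ : 0 ≤ δ)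
    (hzf : ∀ i j, f i ≠ f j → (conj (z i) * z j).re ≤ 1 - δ) :
    ‖∑ i, (μ i : ℂ) * z i‖ ^ 2 ≤ 1 - δ * ε := by
  have hinner : ∀ i, ∑ j, μ j * (conj (z i) * z j).re ≤ 1 - δ * ε := by
    intro i
    refine sum_mul_le_one_sub_mul hμ0 hμ1 _ (hbal (f i)) hδ (fun j ↦ ?_) (fun j hj ↦ ?_)
    · calc (conj (z i) * z j).re ≤ ‖conj (z i) * z j‖ := re_le_norm _
        _ ≤ 1 := by
          rw [norm_mul, RCLike.norm_conj]
          exact mul_le_one₀ (hz i) (norm_nonneg _) (hz j)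
    · exact hzf i j fun h ↦ hj (by simp [h])
  calc ‖∑ i, (μ i : ℂ) * z i‖ ^ 2 = ∑ i, μ i * ∑ j, μ j * (conj (z i) * z j).re := by
        simp only [sq_norm_sum_ofReal_mul, mul_sum, mul_assoc]
    _ ≤ ∑ i, μ i * (1 - δ * ε) :=
        sum_le_sum fun i _ ↦ mul_le_mul_of_nonneg_left (hinner i) (hμ0 i)
    _ = 1 - δ * ε := by rw [← sum_mul, hμ1, one_mul]

theorem stmt_7_general (p k : ℕ) [Fact p.Prime] (hk : 1 ≤ k)
    (ε : ℝ)
    (μ : ZMod (p ^ k) → ℝ) (hμ0 : ∀ x, 0 ≤ μ x) (hμ1 : ∑ x, μ x = 1)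
    (hbal : ∀ a : ZMod p,
      ∑ x ∈ Finset.univ.filter
        (fun x : ZMod (p ^ k) =>
          ZMod.castHom (dvd_pow_self p (Nat.one_le_iff_ne_zero.mp hk)) (ZMod p) x = a),
        μ x ≤ 1 - ε)
    (u : ZMod (p ^ k)) (hu : u ≠ 0) :
    ‖∑ x : ZMod (p ^ k), (μ x : ℂ) *
        Complex.exp (2 * Real.pi * Complex.I * ((u * x).val : ℂ) / ((p ^ k : ℕ) : ℂ))‖
      ≤ Real.exp (-ε / (p ^ (2 * k) : ℕ)) := by
  have hdvd : p ∣ p ^ k := dvd_pow_self p (by omega)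
  have hz : ∀ x y : ZMod (p ^ k),
      ZMod.castHom hdvd (ZMod p) x ≠ ZMod.castHom hdvd (ZMod p) y →
      (conj (ZMod.toCircle (u * x) : ℂ) * ZMod.toCircle (u * y)).re
        ≤ 1 - 2 / ((p ^ k : ℕ) : ℝ) ^ 2 := by
    intro x y hxy
    rw [← Circle.coe_inv_eq_conj, ← Circle.coe_mul, ← AddChar.map_neg_eq_inv,
      ← AddChar.map_add_eq_mul, neg_add_eq_sub, ← mul_sub]
    refine (ZMod.re_toCircle_le ?_).trans (by gcongr; norm_num)
    have hunit : IsUnit (y - x) :=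
      ZMod.isUnit_of_castHom_ne_zero hdvd (by rwa [map_sub, sub_ne_zero, ne_comm])
    rwa [Ne, hunit.mul_left_eq_zero]
  have hS := sq_norm_sum_mul_le_of_balanced hμ0 hμ1 hbal (fun x ↦ (Circle.norm_coe _).le)
    (by positivity) hz
  simp_rw [← ZMod.toCircle_apply]
  rw [← pow_le_pow_iff_left₀ (norm_nonneg _) (Real.exp_pos _).le two_ne_zero, sq (Real.exp _),
    ← Real.exp_add]
  have hN : ((p ^ (2 * k) : ℕ) : ℝ) = ((p ^ k : ℕ) : ℝ) ^ 2 := by push_cast; ring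
  refine hS.trans ((Real.one_sub_le_exp_neg _).trans_eq ?_)
  rw [hN]
  ring_nf

/-- For an ε-balanced probability measure `μ` on `ℤ/p^kℤ` (each residue class mod `p`
has measure at most `1 - ε`) and any nonzero `u ∈ ℤ/p^kℤ`,
`|E_{x ~ μ}(ζ^{ux})| ≤ e^{-ε/p^{2k}}` where `ζ = e^{2πi/p^k}`. -/
theorem stmt_7 (p k : ℕ) [Fact p.Prime] (hk : 1 ≤ k)
    (ε : ℝ) (hε0 : 0 < ε) (hε1 : ε < 1)
    (μ : ZMod (p ^ k) → ℝ) (hμ0 : ∀ x, 0 ≤ μ x) (hμ1 : ∑ x, μ x = 1)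
    (hbal : ∀ a : ZMod p,
      ∑ x ∈ Finset.univ.filter
        (fun x : ZMod (p ^ k) =>
          ZMod.castHom (dvd_pow_self p (Nat.one_le_iff_ne_zero.mp hk)) (ZMod p) x = a),
        μ x ≤ 1 - ε)
    (u : ZMod (p ^ k)) (hu : u ≠ 0) :
    ‖∑ x : ZMod (p ^ k), (μ x : ℂ) *
        Complex.exp (2 * Real.pi * Complex.I * ((u * x).val : ℂ) / ((p ^ k : ℕ) : ℂ))‖
      ≤ Real.exp (-ε / (p ^ (2 * k) : ℕ)) :=
  stmt_7_general p k hk ε μ hμ0 hμ1 hbal u hu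
end

section
/- Let P(t) ∈ ℤ_p[t] be a monic polynomial, G a finite module over ℤ_p[t]/(P(t)), and k ≥ 1 with p^{k−1}G = 0. For an n×n matrix X over ℤ_p with image X' over ℤ/p^kℤ, the cokernel cok(P(X)) is isomorphic to G as a ℤ_p[t]-module if and only if cok(P(X')) is isomorphic to G as a (ℤ/p^kℤ)[t]-module. -/
/-!
Reduction mod `p^k` induces a surjection `π : cok P(X) → cok P(X')`, semilinear along
`ℤ_p[t] → (ℤ/p^k)[t]`, whose kernel lies in `p^k · cok P(X)`. If either cokernel is isomorphic
to `G`, then `p^k` kills `cok P(X)`, so `π` is an isomorphism: directly if `cok P(X) ≅ G`, and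
if `cok P(X') ≅ G` because `p^(k-1) · cok P(X) ⊆ ker π ⊆ p · (p^(k-1) · cok P(X))`, which vanishes
by Nakayama since `cok P(X)` is finitely generated over the local ring `ℤ_p`.
-/

open Polynomial

section Transfer

variable {A A' Q Q' G : Type*} [CommRing A] [CommRing A'] {φ : A →+* A'}
  [AddCommGroup Q] [Module A Q] [AddCommGroup Q'] [Module A' Q']
  [AddCommGroup G] [Module A G] [Module A' G]

theorem LinearMap.nonempty_linearEquiv_iff_of_bijective (hφ : Function.Surjective φ)
    (hG : ∀ (a : A) (g : G), a • g = φ a • g) (π : Q →ₛₗ[φ] Q') (hπ : Function.Bijective π) :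
    Nonempty (Q ≃ₗ[A] G) ↔ Nonempty (Q' ≃ₗ[A'] G) := by
  let πe : Q ≃+ Q' := AddEquiv.ofBijective π hπ
  constructor
  · rintro ⟨e⟩
    let f : Q' →ₗ[A'] G :=
      { toFun := fun y => e (πe.symm y)
        map_add' := fun x y => by simp
        map_smul' := by
          intro b y
          obtain ⟨a, rfl⟩ := hφ b
          have : πe.symm (φ a • y) = a • πe.symm y :=
            πe.symm_apply_eq.mpr <| by
              rw [show πe (a • πe.symm y) = φ a • πe (πe.symm y) from π.map_smulₛₗ a _,
                πe.apply_symm_apply]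
          simp [this, hG] }
    exact ⟨.ofBijective f (e.bijective.comp πe.symm.bijective)⟩
  · rintro ⟨e⟩
    let f : Q →ₗ[A] G :=
      { toFun := fun x => e (π x)
        map_add' := fun x y => by simp
        map_smul' := fun a x => by simp [hG] }
    exact ⟨.ofBijective f (e.bijective.comp hπ)⟩

end Transfer

theorem IsLocalRing.pow_smul_eq_zero_of_forall_pow_smul_eq_pow_succ_smul {R M : Type*}
    [CommRing R] [IsLocalRing R] [AddCommGroup M] [Module R M] [Module.Finite R M] {ϖ : R}
    (hϖ : ϖ ∈ maximalIdeal R) {j : ℕ}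
    (h : ∀ x : M, ∃ y, ϖ ^ j • x = ϖ ^ (j + 1) • y) (x : M) : ϖ ^ j • x = 0 := by
  let N := LinearMap.range (ϖ ^ j • LinearMap.id : M →ₗ[R] M)
  have hle : N ≤ Ideal.span {ϖ} • N := by
    rintro _ ⟨x, rfl⟩
    obtain ⟨y, hy⟩ := h x
    rw [LinearMap.smul_apply, LinearMap.id_apply, hy, pow_succ', mul_smul]
    exact Submodule.smul_mem_smul (Ideal.mem_span_singleton_self ϖ) ⟨y, rfl⟩
  have hjac : Ideal.span {ϖ} ≤ (⊥ : Ideal R).jacobson := by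
    rwa [jacobson_eq_maximalIdeal ⊥ bot_ne_top, Ideal.span_singleton_le_iff_mem]
  have hN : N = ⊥ := Submodule.eq_bot_of_le_smul_of_le_jacobson_bot _ N
    (Module.Finite.iff_fg.mp inferInstance) hle hjac
  have hx : ϖ ^ j • x ∈ N := ⟨x, rfl⟩
  rwa [hN, Submodule.mem_bot] at hx

section AEvalMap

variable {R S : Type*} [CommRing R] [CommRing S] (f : R →+* S) {n : Type*} [Fintype n]
  [DecidableEq n]

theorem Matrix.map_aeval (X : Matrix n n R) (q : R[X]) :
    (aeval X q).map f = aeval (X.map f) (q.map f) := by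
  have hC : f.mapMatrix.comp (algebraMap R (Matrix n n R)) = (algebraMap S _).comp f := by
    ext a : 1
    simp [Matrix.algebraMap_eq_diagonal, Matrix.diagonal_map]
  rw [aeval_def, aeval_def, eval₂_map, ← hC]
  exact hom_eval₂ q _ f.mapMatrix X

theorem Matrix.aeval_mulVecLin (X : Matrix n n R) (q : R[X]) :
    aeval X.mulVecLin q = (aeval X q).mulVecLin :=
  aeval_algHom_apply (Matrix.toLinAlgEquiv' : Matrix n n R ≃ₐ[R] _) X q

noncomputable def Matrix.aevalMap (X : Matrix n n R) :
    Module.AEval' X.mulVecLin →ₛₗ[mapRingHom f] Module.AEval' (X.map f).mulVecLin where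
  toFun m := Module.AEval'.of _ (f ∘ (Module.AEval'.of X.mulVecLin).symm m)
  map_add' x y := by
    rw [← map_add]
    congr 1
    ext i
    simp
  map_smul' q m := by
    rw [Module.AEval.of_symm_smul, coe_mapRingHom, ← Module.AEval.of_aeval_smul]
    congr 1
    ext i
    simp [Matrix.aeval_mulVecLin, ← Matrix.map_aeval, RingHom.map_mulVec]

theorem Matrix.aevalMap_surjective (hf : Function.Surjective f) (X : Matrix n n R) :
    Function.Surjective (X.aevalMap f) := by
  intro y
  choose v hv using fun i => hf ((Module.AEval'.of (X.map f).mulVecLin).symm y i)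
  refine ⟨Module.AEval'.of _ v, ?_⟩
  simp [Matrix.aevalMap, Function.comp_def, hv]

theorem Matrix.exists_eq_nsmul_of_aevalMap_eq_zero {c : ℕ}
    (hf : RingHom.ker f = Ideal.span {(c : R)}) {X : Matrix n n R} {m : Module.AEval' X.mulVecLin}
    (hm : X.aevalMap f m = 0) : ∃ m₁, m = c • m₁ := by
  have hmem : ∀ i, (Module.AEval'.of X.mulVecLin).symm m i ∈ RingHom.ker f := fun i => by
    simpa [Matrix.aevalMap] using
      congrArg (fun z => (Module.AEval'.of (X.map f).mulVecLin).symm z i) hm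
  simp only [hf, Ideal.mem_span_singleton'] at hmem
  choose y hy using hmem
  refine ⟨Module.AEval'.of _ y, (Module.AEval'.of X.mulVecLin).symm.injective ?_⟩
  ext i
  simp [← hy i, mul_comm]

end AEvalMap

section SpanSingletonQuotient

variable {A A' M M' : Type*} [CommRing A] [CommRing A'] {σ : A →+* A'}
  [AddCommGroup M] [Module A M] [AddCommGroup M'] [Module A' M']

open Pointwise in
theorem Submodule.mem_ideal_span_singleton_smul_top {a : A} {m : M} :
    m ∈ Ideal.span {a} • (⊤ : Submodule A M) ↔ ∃ m₀, a • m₀ = m := by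
  simp [Submodule.ideal_span_singleton_smul, Submodule.mem_smul_pointwise_iff_exists]

theorem LinearMap.ideal_span_singleton_smul_top_le_comap (r : M →ₛₗ[σ] M') (a : A) :
    Ideal.span {a} • (⊤ : Submodule A M) ≤
      Submodule.comap r (Ideal.span {σ a} • (⊤ : Submodule A' M')) := by
  intro m hm
  obtain ⟨m₀, rfl⟩ := Submodule.mem_ideal_span_singleton_smul_top.mp hm
  exact Submodule.mem_ideal_span_singleton_smul_top.mpr ⟨r m₀, (r.map_smulₛₗ a m₀).symm⟩

noncomputable def LinearMap.quotSpanSingletonMap (r : M →ₛₗ[σ] M') (a : A) :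
    M ⧸ Ideal.span {a} • (⊤ : Submodule A M) →ₛₗ[σ] M' ⧸ Ideal.span {σ a} • (⊤ : Submodule A' M') :=
  Submodule.mapQ _ _ r (r.ideal_span_singleton_smul_top_le_comap a)

variable {r : M →ₛₗ[σ] M'} (a : A)

theorem LinearMap.quotSpanSingletonMap_surjective (hr : Function.Surjective r) :
    Function.Surjective (r.quotSpanSingletonMap a) := by
  intro y
  obtain ⟨y, rfl⟩ := Submodule.Quotient.mk_surjective _ y
  obtain ⟨x, rfl⟩ := hr y
  exact ⟨Submodule.Quotient.mk x, rfl⟩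

theorem LinearMap.exists_eq_nsmul_of_quotSpanSingletonMap_eq_zero (hr : Function.Surjective r)
    {c : ℕ} (hker : ∀ m, r m = 0 → ∃ m₁, m = c • m₁) {x : M ⧸ Ideal.span {a} • (⊤ : Submodule A M)}
    (hx : r.quotSpanSingletonMap a x = 0) : ∃ y, x = c • y := by
  obtain ⟨m, rfl⟩ := Submodule.Quotient.mk_surjective _ x
  obtain ⟨y', hy'⟩ := Submodule.mem_ideal_span_singleton_smul_top.mp
    ((Submodule.Quotient.mk_eq_zero _).mp hx)
  obtain ⟨y, rfl⟩ := hr y'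
  obtain ⟨m₁, hm₁⟩ := hker (m - a • y) (by rw [map_sub, r.map_smulₛₗ, hy', sub_self])
  refine ⟨Submodule.Quotient.mk m₁, ?_⟩
  rw [← Submodule.Quotient.mk_smul, Submodule.Quotient.eq, ← hm₁, sub_sub_cancel]
  exact Submodule.mem_ideal_span_singleton_smul_top.mpr ⟨y, rfl⟩

end SpanSingletonQuotient

theorem nonempty_linearEquiv_iff_of_ker_le_pow_smul {R A A' Q Q' G : Type*} [CommRing R]
    [IsLocalRing R] [CommRing A] [CommRing A'] {φ : A →+* A'}
    [AddCommGroup Q] [Module A Q] [Module R Q] [Module.Finite R Q] [AddCommGroup Q'] [Module A' Q']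
    [AddCommGroup G] [Module A G] [Module A' G] {p j : ℕ}
    (hp : (p : R) ∈ IsLocalRing.maximalIdeal R) (hφ : Function.Surjective φ)
    (hG : ∀ (a : A) (g : G), a • g = φ a • g) (hGj : ∀ g : G, p ^ j • g = 0)
    (π : Q →ₛₗ[φ] Q') (hπ : Function.Surjective π)
    (hker : ∀ x, π x = 0 → ∃ y, x = p ^ (j + 1) • y) :
    Nonempty (Q ≃ₗ[A] G) ↔ Nonempty (Q' ≃ₗ[A'] G) := by
  have hbij (hQ : ∀ x : Q, p ^ (j + 1) • x = 0) : Function.Bijective π := by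
    refine ⟨(injective_iff_map_eq_zero π).mpr fun x hx => ?_, hπ⟩
    obtain ⟨y, rfl⟩ := hker x hx
    exact hQ y
  constructor
  · rintro ⟨e⟩
    have hQ (x : Q) : p ^ (j + 1) • x = 0 :=
      e.injective <| by rw [map_nsmul, pow_succ', mul_smul, hGj, smul_zero, map_zero]
    exact (π.nonempty_linearEquiv_iff_of_bijective hφ hG (hbij hQ)).mp ⟨e⟩
  · rintro ⟨e⟩
    have hQj (x : Q) : p ^ j • x = 0 := by
      have hcast (i : ℕ) (x : Q) : (p : R) ^ i • x = p ^ i • x := by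
        rw [← Nat.cast_pow, Nat.cast_smul_eq_nsmul]
      rw [← hcast]
      refine IsLocalRing.pow_smul_eq_zero_of_forall_pow_smul_eq_pow_succ_smul hp (fun x => ?_) x
      have hπx : π (p ^ j • x) = 0 :=
        e.injective <| by rw [map_nsmul, map_nsmul, hGj, map_zero]
      obtain ⟨y, hy⟩ := hker _ hπx
      exact ⟨y, by rw [hcast, hcast, hy]⟩
    refine (π.nonempty_linearEquiv_iff_of_bijective hφ hG (hbij fun x => ?_)).mpr ⟨e⟩
    rw [pow_succ', mul_smul, hQj, smul_zero]

theorem stmt_13_general (p k n : ℕ) [Fact p.Prime] (hk : 1 ≤ k)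
    (P : Polynomial ℤ_[p])
    (G : Type*) [AddCommGroup G]
    [Module (Polynomial ℤ_[p]) G] [Module (Polynomial (ZMod (p ^ k))) G]
    (hcompat : ∀ (q : Polynomial ℤ_[p]) (g : G),
      q • g = (q.map (PadicInt.toZModPow k)) • g)
    (hGk : ∀ g : G, (p ^ (k - 1)) • g = 0)
    (X : Matrix (Fin n) (Fin n) ℤ_[p]) :
    Nonempty
      ((Module.AEval' X.mulVecLin ⧸
          (Ideal.span {P} • (⊤ : Submodule (Polynomial ℤ_[p])
            (Module.AEval' X.mulVecLin))))
        ≃ₗ[Polynomial ℤ_[p]] G)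
    ↔ Nonempty
      ((Module.AEval' (X.map (PadicInt.toZModPow k)).mulVecLin ⧸
          (Ideal.span {P.map (PadicInt.toZModPow k)} •
            (⊤ : Submodule (Polynomial (ZMod (p ^ k)))
              (Module.AEval' (X.map (PadicInt.toZModPow k)).mulVecLin))))
        ≃ₗ[Polynomial (ZMod (p ^ k))] G) := by
  obtain ⟨j, rfl⟩ : ∃ j, k = j + 1 := ⟨k - 1, by omega⟩
  have hp : (p : ℤ_[p]) ∈ IsLocalRing.maximalIdeal ℤ_[p] := by
    rw [PadicInt.maximalIdeal_eq_span_p]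
    exact Ideal.mem_span_singleton_self _
  have hker : RingHom.ker (PadicInt.toZModPow (p := p) (j + 1)) =
      Ideal.span {((p ^ (j + 1) : ℕ) : ℤ_[p])} := by
    rw [PadicInt.ker_toZModPow, Nat.cast_pow]
  have hred : Function.Surjective (PadicInt.toZModPow (p := p) (j + 1)) :=
    ZMod.ringHom_surjective _
  let r := X.aevalMap (PadicInt.toZModPow (j + 1))
  exact nonempty_linearEquiv_iff_of_ker_le_pow_smul hp (map_surjective _ hred) hcompat
    (by simpa using hGk) (r.quotSpanSingletonMap P)
    (r.quotSpanSingletonMap_surjective P (X.aevalMap_surjective _ hred))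
    (fun _ => r.exists_eq_nsmul_of_quotSpanSingletonMap_eq_zero P
      (X.aevalMap_surjective _ hred) fun _ => Matrix.exists_eq_nsmul_of_aevalMap_eq_zero _ hker)

/-- For a monic `P(t) ∈ ℤ_p[t]`, a finite `ℤ_p[t]/(P)`-module `G` with `p^(k-1)·G = 0`,
and an `n × n` matrix `X` over `ℤ_p` with reduction `X'` mod `p^k`:
`cok(P(X)) ≅ G` as `ℤ_p[t]`-modules (with `t` acting via `X`) if and only if
`cok(P(X')) ≅ G` as `(ℤ/p^kℤ)[t]`-modules (with `t` acting via `X'`). -/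
theorem stmt_13 (p k n : ℕ) [Fact p.Prime] (hk : 1 ≤ k)
    (P : Polynomial ℤ_[p]) (hP : P.Monic)
    (G : Type*) [AddCommGroup G] [Finite G]
    [Module (Polynomial ℤ_[p]) G] [Module (Polynomial (ZMod (p ^ k))) G]
    (hcompat : ∀ (q : Polynomial ℤ_[p]) (g : G),
      q • g = (q.map (PadicInt.toZModPow k)) • g)
    (hPann : ∀ g : G, P • g = 0)
    (hGk : ∀ g : G, (p ^ (k - 1)) • g = 0)
    (X : Matrix (Fin n) (Fin n) ℤ_[p]) :
    Nonempty
      ((Module.AEval' X.mulVecLin ⧸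
          (Ideal.span {P} • (⊤ : Submodule (Polynomial ℤ_[p])
            (Module.AEval' X.mulVecLin))))
        ≃ₗ[Polynomial ℤ_[p]] G)
    ↔ Nonempty
      ((Module.AEval' (X.map (PadicInt.toZModPow k)).mulVecLin ⧸
          (Ideal.span {P.map (PadicInt.toZModPow k)} •
            (⊤ : Submodule (Polynomial (ZMod (p ^ k)))
              (Module.AEval' (X.map (PadicInt.toZModPow k)).mulVecLin))))
        ≃ₗ[Polynomial (ZMod (p ^ k))] G) :=
  stmt_13_general p k n hk P G hcompat hGk X
end
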